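/- Let f be Legendre on ℝ^J with Bregman distance D, C ⊆ U = int dom f nonempty compact, and x ∈ U. Then ∂F_C(x) = ∇f(x) - conv(∇f(Q_C(x))), where F_C(x) = sup_{c∈C} D(x,c) and Q_C(x) = argmax_{c∈C} D(x,c). -/

import Mathlib

open Set Filter Topology Bornology

noncomputable section

/-- Data for a Bregman setup on `ℝ^J`: an extended-real-valued function `f`
together with a choice of gradient map (meaningful on the interior of the domain). -/
structure BregmanSetup (J : ℕ) where
  f : EuclideanSpace ℝ (Fin J) → EReal
  grad : EuclideanSpace ℝ (Fin J) → EuclideanSpace ℝ (Fin J)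

namespace BregmanSetup

open scoped Classical

variable {J : ℕ} (B : BregmanSetup J)

/-- The (essential) domain of `f`. -/
def dom : Set (EuclideanSpace ℝ (Fin J)) := {x | B.f x ≠ ⊤}

/-- `U`, the interior of the domain of `f`. -/
def U : Set (EuclideanSpace ℝ (Fin J)) := interior B.dom

/-- `f` is a convex function of Legendre type: proper, lsc, convex,
essentially smooth (differentiable on `U` with gradient `B.grad`, steep at the
boundary) and essentially strictly convex (strictly convex on `U`). -/
structure IsLegendre : Prop where
  proper_bot : ∀ x, B.f x ≠ ⊥
  nonempty_int : B.U.Nonempty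
  convex_dom : Convex ℝ B.dom
  convexOn : ConvexOn ℝ B.dom (fun x => (B.f x).toReal)
  lsc : LowerSemicontinuous B.f
  smooth : ∀ y ∈ B.U, HasGradientAt (fun x => (B.f x).toReal) (B.grad y) y
  strict : StrictConvexOn ℝ B.U (fun x => (B.f x).toReal)
  steep : ∀ x ∈ frontier B.dom, ∀ s : ℕ → EuclideanSpace ℝ (Fin J),
    (∀ n, s n ∈ B.U) → Tendsto s atTop (nhds x) →
    Tendsto (fun n => ‖B.grad (s n)‖) atTop atTop

/-- The Bregman distance `D(x,y) = f(x) - f(y) - ⟨∇f(y), x - y⟩` for `y ∈ U`,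
and `+∞` otherwise. -/
def D (x y : EuclideanSpace ℝ (Fin J)) : EReal :=
  if y ∈ B.U then B.f x - B.f y - ((inner ℝ (B.grad y) (x - y) : ℝ) : EReal) else ⊤

/-- The right Bregman farthest-distance function of a set `C`. -/
def F (C : Set (EuclideanSpace ℝ (Fin J))) (x : EuclideanSpace ℝ (Fin J)) : EReal :=
  ⨆ c ∈ C, B.D x c

/-- The right Bregman farthest-point map of a set `C` (empty outside `dom f`). -/
def Q (C : Set (EuclideanSpace ℝ (Fin J))) (x : EuclideanSpace ℝ (Fin J)) :
    Set (EuclideanSpace ℝ (Fin J)) :=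
  {c | c ∈ C ∧ x ∈ B.dom ∧ ∀ c' ∈ C, B.D x c' ≤ B.D x c}

end BregmanSetup

/-- The convex subdifferential of an extended-real-valued function. -/
def subdiff {J : ℕ} (g : EuclideanSpace ℝ (Fin J) → EReal) (x : EuclideanSpace ℝ (Fin J)) : Set (EuclideanSpace ℝ (Fin J)) :=
  {p | g x ≠ ⊤ ∧ ∀ z, g x + ((inner ℝ p (z - x) : ℝ) : EReal) ≤ g z}

/-!
For `c ∈ U` let `T_c(z) = f(c) + ⟪∇f(c), z - c⟫` be the tangent of `f` at `c`, so that
`D(z, c) = f(z) - T_c(z)`. On `dom f` the farthest-distance function is therefore `F_C = f - m`,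
where `m = min_{c ∈ C} T_c` is the lower envelope of a compact, continuously parametrised family
of affine functions (`∇f` is continuous on `U` since `f` is convex and differentiable there), and
`Q_C(x)` is the set of points of `C` whose tangent is active at `x`.

For `q ∈ Q_C(x)`, the gradient inequality for `f` together with `m ≤ T_q` shows that
`∇f(x) - ∇f(q)` is a subgradient of `F_C` at `x`; the subdifferential is convex. Conversely, for
`p ∈ ∂F_C(x)` and a direction `d`, compare `F_C` at `x` and at `x + t d` using a tangent `q_t`
active at `x + t d`; as `t → 0⁺` along a subsequence, `q_t → q ∈ Q_C(x)` and
`⟪p, d⟫ ≤ ⟪∇f(x) - ∇f(q), d⟫`. As `conv ∇f(Q_C(x))` is compact, separation puts `∇f(x) - p`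
in it.
-/

open scoped RealInnerProductSpace

theorem IsCompact.convexHull {F : Type*} [NormedAddCommGroup F] [NormedSpace ℝ F]
    [FiniteDimensional ℝ F] {s : Set F} (hs : IsCompact s) : IsCompact (convexHull ℝ s) := by
  rcases s.eq_empty_or_nonempty with rfl | ⟨c, hc⟩
  · simp
  set n := Module.finrank ℝ F + 1
  suffices _root_.convexHull ℝ s = (fun q : (Fin n → ℝ) × (Fin n → F) => ∑ i, q.1 i • q.2 i) ''
      (stdSimplex ℝ (Fin n) ×ˢ univ.pi fun _ => s) by
    rw [this]
    exact ((isCompact_stdSimplex ℝ _).prod (isCompact_univ_pi fun _ => hs)).image (by fun_prop)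
  refine subset_antisymm (fun x hx => ?_) ?_
  · -- Carathéodory: `x` is a convex combination of at most `n` points of `s`; pad it to `n`.
    obtain ⟨ι, _, z, w, hzs, hz, hw0, hw1, rfl⟩ := eq_pos_convex_span_of_mem_convexHull hx
    have hcard : Fintype.card ι ≤ n :=
      hz.card_le_finrank_succ.trans (Nat.succ_le_succ (Submodule.finrank_le _))
    let e : ι ⊕ Fin (n - Fintype.card ι) ≃ Fin n := Fintype.equivFinOfCardEq (by simp; omega)
    let w' : ι ⊕ Fin (n - Fintype.card ι) → ℝ := Sum.elim w 0
    let z' : ι ⊕ Fin (n - Fintype.card ι) → F := Sum.elim z fun _ => c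
    have hw' : ∀ k, 0 ≤ w' k := by rintro (i | i); exacts [(hw0 i).le, le_rfl]
    have hz' : ∀ k, z' k ∈ s := by rintro (i | i); exacts [hzs (mem_range_self i), hc]
    refine ⟨(w' ∘ e.symm, z' ∘ e.symm), ⟨⟨fun j => hw' _, ?_⟩, fun j _ => hz' _⟩, ?_⟩
    · simpa [e.symm.sum_comp w', w'] using hw1
    · simp [e.symm.sum_comp (fun k => w' k • z' k), w', z']
  · rintro _ ⟨⟨w, v⟩, ⟨⟨hw0, hw1⟩, hv⟩, rfl⟩
    exact (convex_convexHull ℝ s).sum_mem (fun i _ => hw0 i) hw1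
      fun i _ => subset_convexHull ℝ s (hv i (mem_univ i))

theorem tendsto_of_forall_tendsto_inner {E α : Type*} [NormedAddCommGroup E]
    [InnerProductSpace ℝ E] [FiniteDimensional ℝ E] {l : Filter α} {u : α → E} {a : E}
    (h : ∀ d, Tendsto (fun y => ⟪u y, d⟫) l (𝓝 ⟪a, d⟫)) :
    Tendsto u l (𝓝 a) := by
  set b := stdOrthonormalBasis ℝ E
  have hsum : ∀ v, ∑ i, ⟪v, b i⟫ • b i = v := fun v => by
    simpa only [real_inner_comm] using b.sum_repr' v
  simpa only [hsum] using tendsto_finsetSum Finset.univ fun i _ => (h (b i)).smul_const (b i)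

section ConvexGradient

variable {E : Type*} [NormedAddCommGroup E] [InnerProductSpace ℝ E] [CompleteSpace E]
  {φ : E → ℝ} {s U : Set E} {x d : E} {g : E}

theorem HasGradientAt.hasDerivAt_comp_add_smul (h : HasGradientAt φ g x) (d : E) :
    HasDerivAt (fun t : ℝ => φ (x + t • d)) ⟪g, d⟫ 0 := by
  have hline : HasDerivAt (fun t : ℝ => x + t • d) d 0 := by
    simpa using ((hasDerivAt_id (0 : ℝ)).smul_const d).const_add x
  have hφ : HasFDerivAt φ (InnerProductSpace.toDual ℝ E g) (x + (0 : ℝ) • d) := by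
    simpa using h.hasFDerivAt
  simpa [Function.comp_def] using hφ.comp_hasDerivAt (0 : ℝ) hline

theorem HasGradientAt.tendsto_div (h : HasGradientAt φ g x) (d : E) :
    Tendsto (fun t : ℝ => (φ (x + t • d) - φ x) / t) (𝓝[≠] 0) (𝓝 ⟪g, d⟫) := by
  convert (h.hasDerivAt_comp_add_smul d).tendsto_slope using 2 with t
  simp [slope_def_field]

theorem ConvexOn.inner_le_div_of_hasGradientAt (hφ : ConvexOn ℝ s φ) (h : HasGradientAt φ g x)
    (hx : x ∈ s) {t : ℝ} (ht : 0 < t) (hxt : x + t • d ∈ s) :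
    ⟪g, d⟫ ≤ (φ (x + t • d) - φ x) / t := by
  have hline : ConvexOn ℝ {t : ℝ | x + t • d ∈ s} (fun t : ℝ => φ (x + t • d)) := by
    convert hφ.comp_affineMap (AffineMap.lineMap x (x + d)) using 1 <;>
      ext <;> simp [AffineMap.lineMap_apply_module', add_comm]
  simpa [slope_def_field] using
    hline.le_slope_of_hasDerivAt (by simpa using hx) hxt ht (h.hasDerivAt_comp_add_smul d)

theorem ConvexOn.add_inner_le_of_hasGradientAt (hφ : ConvexOn ℝ s φ) (h : HasGradientAt φ g x)
    (hx : x ∈ s) {z : E} (hz : z ∈ s) : φ x + ⟪g, z - x⟫ ≤ φ z := by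
  have := hφ.inner_le_div_of_hasGradientAt h hx one_pos (d := z - x) (by simpa using hz)
  simp only [one_smul, add_sub_cancel, div_one] at this
  linarith

theorem ConvexOn.eventually_inner_lt_of_hasGradientAt (hφ : ConvexOn ℝ s φ) (hU : IsOpen U)
    (hUs : U ⊆ s) {grad : E → E} (hgrad : ∀ y ∈ U, HasGradientAt φ (grad y) y) {c : E}
    (hc : c ∈ U) (d : E) {ε : ℝ} (hε : 0 < ε) :
    ∀ᶠ y in 𝓝 c, ⟪grad y, d⟫ < ⟪grad c, d⟫ + ε := by
  -- `⟪∇φ(y), d⟫` is bounded by a difference quotient of `φ` at `y`, which is continuous in `y`.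
  have hline : Tendsto (fun t : ℝ => c + t • d) (𝓝 0) (𝓝 c) := by
    have : Continuous fun t : ℝ => c + t • d := by fun_prop
    simpa using this.tendsto 0
  have hslope : Tendsto (fun t : ℝ => (φ (c + t • d) - φ c) / t) (𝓝[>] 0) (𝓝 ⟪grad c, d⟫) :=
    ((hgrad c hc).tendsto_div d).mono_left (nhdsGT_le_nhdsNE 0)
  obtain ⟨t, ht_lt, htU, ht⟩ :=
    ((hslope.eventually (gt_mem_nhds (lt_add_of_pos_right _ hε))).and
      (((hline.eventually (hU.mem_nhds hc)).filter_mono nhdsWithin_le_nhds).and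
        self_mem_nhdsWithin)).exists
  have hquot : ContinuousAt (fun y => (φ (y + t • d) - φ y) / t) c :=
    ((ContinuousAt.comp (g := φ) (f := fun y => y + t • d) (hgrad _ htU).continuousAt
      (by fun_prop)).sub (hgrad c hc).continuousAt).div_const t
  filter_upwards [hquot.eventually (gt_mem_nhds ht_lt), hU.mem_nhds hc,
    (continuous_add_const (t • d)).continuousAt.preimage_mem_nhds (hU.mem_nhds htU)]
    with y hy hyU hytU
  exact (hφ.inner_le_div_of_hasGradientAt (hgrad y hyU) (hUs hyU) ht (hUs hytU)).trans_lt hy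

theorem ConvexOn.continuousOn_gradient [FiniteDimensional ℝ E] (hφ : ConvexOn ℝ s φ)
    (hU : IsOpen U) (hUs : U ⊆ s) {grad : E → E} (hgrad : ∀ y ∈ U, HasGradientAt φ (grad y) y) :
    ContinuousOn grad U := by
  refine fun c hc => (tendsto_of_forall_tendsto_inner fun d => ?_).mono_left nhdsWithin_le_nhds
  refine tendsto_order.2 ⟨fun a ha => ?_, fun a ha => ?_⟩
  · filter_upwards [hφ.eventually_inner_lt_of_hasGradientAt hU hUs hgrad hc (-d)
      (sub_pos.2 ha)] with y hy
    simp only [inner_neg_right] at hy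
    linarith
  · filter_upwards [hφ.eventually_inner_lt_of_hasGradientAt hU hUs hgrad hc d
      (sub_pos.2 ha)] with y hy
    linarith

theorem mem_of_forall_exists_inner_le {K : Set E} (hK : Convex ℝ K) (hKc : IsClosed K) {v : E}
    (h : ∀ d, ∃ w ∈ K, ⟪v, d⟫ ≤ ⟪w, d⟫) : v ∈ K := by
  by_contra hv
  obtain ⟨f, u, hfK, hfv⟩ := geometric_hahn_banach_closed_point hK hKc hv
  obtain ⟨w, hw, hvw⟩ := h ((InnerProductSpace.toDual ℝ E).symm f)
  simp only [real_inner_comm ((InnerProductSpace.toDual ℝ E).symm f),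
    InnerProductSpace.toDual_symm_apply] at hvw
  linarith [hfK w hw]

end ConvexGradient

section Subdifferential

variable {J : ℕ}

theorem convex_subdiff (g : EuclideanSpace ℝ (Fin J) → EReal) (x : EuclideanSpace ℝ (Fin J)) :
    Convex ℝ (subdiff g x) := by
  rintro p₁ ⟨hx, h₁⟩ p₂ ⟨-, h₂⟩ a b ha hb hab
  refine ⟨hx, fun z => ?_⟩
  have h₁ := h₁ z
  have h₂ := h₂ z
  revert hx h₁ h₂
  induction g x using EReal.rec with
  | bot => simp
  | top => simp
  | coe r =>
    induction g z using EReal.rec with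
    | bot => simp [← EReal.coe_add]
    | top => simp
    | coe s =>
      intro _ h₁ h₂
      norm_cast at h₁ h₂ ⊢
      rw [inner_add_left, real_inner_smul_left, real_inner_smul_left]
      obtain rfl : b = 1 - a := by linarith
      nlinarith [mul_le_mul_of_nonneg_left h₁ ha, mul_le_mul_of_nonneg_left h₂ hb]

theorem mem_subdiff_iff_of_eq_coe {g : EuclideanSpace ℝ (Fin J) → EReal}
    {h : EuclideanSpace ℝ (Fin J) → ℝ} {s : Set (EuclideanSpace ℝ (Fin J))}
    (hg : ∀ z ∈ s, g z = h z) (hg_top : ∀ z ∉ s, g z = ⊤) {x p : EuclideanSpace ℝ (Fin J)}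
    (hx : x ∈ s) : p ∈ subdiff g x ↔ ∀ z ∈ s, h x + ⟪p, z - x⟫ ≤ h z := by
  simp only [subdiff, mem_ofPred_eq, hg x hx, ne_eq, EReal.coe_ne_top, not_false_eq_true,
    true_and]
  refine forall_congr' fun z => ?_
  by_cases hz : z ∈ s
  · simp only [hg z hz, hz, true_imp_iff]
    norm_cast
  · simp [hg_top z hz, hz]

end Subdifferential

namespace BregmanSetup

variable {J : ℕ}

/-- `f` as a real function (`toReal` sends the value `⊤` off `dom f` to `0`). -/
def φ (B : BregmanSetup J) (z : EuclideanSpace ℝ (Fin J)) : ℝ := (B.f z).toReal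

def tangent (B : BregmanSetup J) (c z : EuclideanSpace ℝ (Fin J)) : ℝ :=
  B.φ c + ⟪B.grad c, z - c⟫

def envelope (B : BregmanSetup J) (C : Set (EuclideanSpace ℝ (Fin J)))
    (z : EuclideanSpace ℝ (Fin J)) : ℝ :=
  sInf ((B.tangent · z) '' C)

variable {B : BregmanSetup J} {C : Set (EuclideanSpace ℝ (Fin J))}
  {c q x z : EuclideanSpace ℝ (Fin J)}

theorem tangent_sub_tangent (B : BregmanSetup J) (c x z : EuclideanSpace ℝ (Fin J)) :
    B.tangent c z - B.tangent c x = ⟪B.grad c, z - x⟫ := by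
  rw [tangent, tangent, add_sub_add_left_eq_sub, ← inner_sub_right, sub_sub_sub_cancel_right]

theorem IsLegendre.f_eq_coe_φ (hB : B.IsLegendre) (hz : z ∈ B.dom) : B.f z = B.φ z :=
  (EReal.coe_toReal hz (hB.proper_bot z)).symm

theorem IsLegendre.continuousOn_grad (hB : B.IsLegendre) : ContinuousOn B.grad B.U :=
  hB.convexOn.continuousOn_gradient isOpen_interior interior_subset hB.smooth

theorem IsLegendre.continuousOn_tangent (hB : B.IsLegendre) :
    ContinuousOn (fun p : EuclideanSpace ℝ (Fin J) × EuclideanSpace ℝ (Fin J) =>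
      B.tangent p.1 p.2) (B.U ×ˢ univ) := by
  have hφ : ContinuousOn B.φ B.U := HasGradientAt.continuousOn hB.smooth
  exact (hφ.comp continuousOn_fst fun p hp => hp.1).add
    ((hB.continuousOn_grad.comp continuousOn_fst fun p hp => hp.1).inner
      (continuousOn_snd.sub continuousOn_fst))

theorem IsLegendre.D_eq (hB : B.IsLegendre) (hz : z ∈ B.dom) (hc : c ∈ B.U) :
    B.D z c = ((B.φ z - B.tangent c z : ℝ) : EReal) := by
  rw [D, if_pos hc, hB.f_eq_coe_φ hz, hB.f_eq_coe_φ (interior_subset hc), tangent]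
  norm_cast
  ring

theorem IsLegendre.D_eq_top (hB : B.IsLegendre) (hz : z ∉ B.dom) (hc : c ∈ B.U) : B.D z c = ⊤ := by
  rw [D, if_pos hc, not_not.1 hz, hB.f_eq_coe_φ (interior_subset hc), EReal.top_sub_coe,
    EReal.top_sub_coe]

theorem IsLegendre.isCompact_image_tangent (hB : B.IsLegendre) (hCU : C ⊆ B.U)
    (hCcomp : IsCompact C) (z : EuclideanSpace ℝ (Fin J)) : IsCompact ((B.tangent · z) '' C) :=
  hCcomp.image_of_continuousOn <| (hB.continuousOn_tangent.comp
    (continuousOn_id.prodMk continuousOn_const) fun _ hc => ⟨hc, trivial⟩).mono hCU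

theorem IsLegendre.envelope_le_tangent (hB : B.IsLegendre) (hCU : C ⊆ B.U)
    (hCcomp : IsCompact C) (hc : c ∈ C) (z : EuclideanSpace ℝ (Fin J)) :
    B.envelope C z ≤ B.tangent c z :=
  csInf_le (hB.isCompact_image_tangent hCU hCcomp z).bddBelow (mem_image_of_mem _ hc)

theorem IsLegendre.tangent_eq_envelope_iff (hB : B.IsLegendre) (hCU : C ⊆ B.U)
    (hCcomp : IsCompact C) (hq : q ∈ C) :
    B.tangent q z = B.envelope C z ↔ ∀ c ∈ C, B.tangent q z ≤ B.tangent c z := by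
  refine ⟨fun h c hc => h ▸ hB.envelope_le_tangent hCU hCcomp hc z, fun h => ?_⟩
  exact le_antisymm (le_csInf ⟨_, mem_image_of_mem _ hq⟩ (forall_mem_image.2 h))
    (hB.envelope_le_tangent hCU hCcomp hq z)

theorem IsLegendre.exists_tangent_eq_envelope (hB : B.IsLegendre) (hCne : C.Nonempty)
    (hCU : C ⊆ B.U) (hCcomp : IsCompact C) (z : EuclideanSpace ℝ (Fin J)) :
    ∃ q ∈ C, B.tangent q z = B.envelope C z :=
  (hB.isCompact_image_tangent hCU hCcomp z).sInf_mem (hCne.image _)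

theorem IsLegendre.F_eq (hB : B.IsLegendre) (hCne : C.Nonempty) (hCU : C ⊆ B.U)
    (hCcomp : IsCompact C) (hz : z ∈ B.dom) : B.F C z = ((B.φ z - B.envelope C z : ℝ) : EReal) := by
  obtain ⟨q, hq, hqz⟩ := hB.exists_tangent_eq_envelope hCne hCU hCcomp z
  refine le_antisymm (iSup₂_le fun c hc => ?_) ?_
  · rw [hB.D_eq hz (hCU hc), EReal.coe_le_coe_iff]
    linarith [hB.envelope_le_tangent hCU hCcomp hc z]
  · rw [← hqz, ← hB.D_eq hz (hCU hq)]
    exact le_iSup₂ (f := fun c _ => B.D z c) q hq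

theorem IsLegendre.mem_Q_iff (hB : B.IsLegendre) (hCU : C ⊆ B.U) (hCcomp : IsCompact C)
    (hx : x ∈ B.dom) :
    q ∈ B.Q C x ↔ q ∈ C ∧ B.tangent q x = B.envelope C x := by
  refine and_congr_right fun hq => ?_
  rw [hB.tangent_eq_envelope_iff hCU hCcomp hq, and_iff_right hx]
  refine forall₂_congr fun c hc => ?_
  rw [hB.D_eq hx (hCU hc), hB.D_eq hx (hCU hq), EReal.coe_le_coe_iff, sub_le_sub_iff_left]

theorem IsLegendre.mem_subdiff_F_iff (hB : B.IsLegendre) (hCne : C.Nonempty) (hCU : C ⊆ B.U)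
    (hCcomp : IsCompact C) {p : EuclideanSpace ℝ (Fin J)} (hx : x ∈ B.dom) :
    p ∈ subdiff (B.F C) x ↔
      ∀ z ∈ B.dom, B.φ x - B.envelope C x + ⟪p, z - x⟫ ≤ B.φ z - B.envelope C z := by
  refine mem_subdiff_iff_of_eq_coe (fun z hz => hB.F_eq hCne hCU hCcomp hz) (fun z hz => ?_) hx
  obtain ⟨c, hc⟩ := hCne
  exact top_le_iff.1 (hB.D_eq_top hz (hCU hc) ▸ le_iSup₂ (f := fun c _ => B.D z c) c hc)

theorem IsLegendre.grad_sub_grad_mem_subdiff (hB : B.IsLegendre) (hCne : C.Nonempty) (hCU : C ⊆ B.U)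
    (hCcomp : IsCompact C) (hx : x ∈ B.U) (hq : q ∈ B.Q C x) :
    B.grad x - B.grad q ∈ subdiff (B.F C) x := by
  have hxd := interior_subset hx
  obtain ⟨hqC, hqx⟩ := (hB.mem_Q_iff hCU hCcomp hxd).1 hq
  refine (hB.mem_subdiff_F_iff hCne hCU hCcomp hxd).2 fun z hz => ?_
  have hconv := hB.convexOn.add_inner_le_of_hasGradientAt (hB.smooth x hx) hxd hz
  have htan := B.tangent_sub_tangent q x z
  have henv := hB.envelope_le_tangent hCU hCcomp hqC z
  rw [inner_sub_left]
  change B.φ x + _ ≤ B.φ z at hconv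
  linarith

theorem IsLegendre.isCompact_Q (hB : B.IsLegendre) (hCU : C ⊆ B.U) (hCcomp : IsCompact C)
    (hx : x ∈ B.dom) : IsCompact (B.Q C x) := by
  have hcont : ContinuousOn (B.tangent · x) C := (hB.continuousOn_tangent.comp
    (continuousOn_id.prodMk continuousOn_const) fun _ hc => ⟨hc, trivial⟩).mono hCU
  have hQ : B.Q C x = C ∩ (B.tangent · x) ⁻¹' {B.envelope C x} := by
    ext q
    exact hB.mem_Q_iff hCU hCcomp hx
  rw [hQ]
  exact hCcomp.of_isClosed_subset (hcont.preimage_isClosed_of_isClosed hCcomp.isClosed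
    isClosed_singleton) inter_subset_left

theorem IsLegendre.inner_add_inner_grad_le (hB : B.IsLegendre) (hCne : C.Nonempty) (hCU : C ⊆ B.U)
    (hCcomp : IsCompact C) {p d : EuclideanSpace ℝ (Fin J)} (hx : x ∈ B.dom)
    (hp : p ∈ subdiff (B.F C) x) {t : ℝ} (ht : 0 < t) (hxt : x + t • d ∈ B.dom) (hq : q ∈ C)
    (hqt : B.tangent q (x + t • d) = B.envelope C (x + t • d)) :
    ⟪p, d⟫ + ⟪B.grad q, d⟫ ≤ (B.φ (x + t • d) - B.φ x) / t := by
  have hsub := (hB.mem_subdiff_F_iff hCne hCU hCcomp hx).1 hp _ hxt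
  have htan := B.tangent_sub_tangent q x (x + t • d)
  have henv := hB.envelope_le_tangent hCU hCcomp hq x
  rw [add_sub_cancel_left, real_inner_smul_right] at hsub htan
  rw [le_div_iff₀ ht]
  linarith

theorem IsLegendre.mem_Q_of_tendsto (hB : B.IsLegendre) (hCU : C ⊆ B.U) (hCcomp : IsCompact C)
    (hx : x ∈ B.dom) {z q : ℕ → EuclideanSpace ℝ (Fin J)} {q₀ : EuclideanSpace ℝ (Fin J)}
    (hz : Tendsto z atTop (𝓝 x)) (hq : Tendsto q atTop (𝓝 q₀)) (hqC : ∀ n, q n ∈ C)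
    (hqz : ∀ n, B.tangent (q n) (z n) = B.envelope C (z n)) : q₀ ∈ B.Q C x := by
  have hq₀ : q₀ ∈ C := hCcomp.isClosed.mem_of_tendsto hq (Eventually.of_forall hqC)
  have hlim : ∀ c ∈ C, ∀ {a : ℕ → EuclideanSpace ℝ (Fin J)}, Tendsto a atTop (𝓝 c) →
      (∀ n, a n ∈ C) → Tendsto (fun n => B.tangent (a n) (z n)) atTop (𝓝 (B.tangent c x)) :=
    fun c hc a ha haC => (hB.continuousOn_tangent (c, x) ⟨hCU hc, trivial⟩).tendsto.comp
      (tendsto_nhdsWithin_iff.2 ⟨ha.prodMk_nhds hz, .of_forall fun n => ⟨hCU (haC n), trivial⟩⟩)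
  refine (hB.mem_Q_iff hCU hCcomp hx).2 ⟨hq₀, (hB.tangent_eq_envelope_iff hCU hCcomp hq₀).2
    fun c hc => le_of_tendsto_of_tendsto' (hlim q₀ hq₀ hq hqC)
      (hlim c hc tendsto_const_nhds fun _ => hc) fun n => ?_⟩
  exact (hB.tangent_eq_envelope_iff hCU hCcomp (hqC n)).1 (hqz n) c hc

theorem IsLegendre.exists_mem_Q_inner_le (hB : B.IsLegendre) (hCne : C.Nonempty) (hCU : C ⊆ B.U)
    (hCcomp : IsCompact C) (hx : x ∈ B.U) {p : EuclideanSpace ℝ (Fin J)}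
    (hp : p ∈ subdiff (B.F C) x) (d : EuclideanSpace ℝ (Fin J)) :
    ∃ q ∈ B.Q C x, ⟪p, d⟫ ≤ ⟪B.grad x - B.grad q, d⟫ := by
  have hxd := interior_subset hx
  obtain ⟨t, ht, ht_pos⟩ : ∃ t : ℕ → ℝ, Tendsto t atTop (𝓝 0) ∧ ∀ n, 0 < t n :=
    ⟨fun n => 1 / (n + 1), tendsto_one_div_add_atTop_nhds_zero_nat, fun _ => by positivity⟩
  choose q hqC hqz using fun n => hB.exists_tangent_eq_envelope hCne hCU hCcomp (x + t n • d)
  obtain ⟨q₀, hq₀, σ, hσ, hqσ⟩ := hCcomp.tendsto_subseq hqC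
  have htσ : Tendsto (t ∘ σ) atTop (𝓝 0) := ht.comp hσ.tendsto_atTop
  have hzσ : Tendsto (fun k => x + t (σ k) • d) atTop (𝓝 x) := by
    simpa using tendsto_const_nhds.add (htσ.smul_const d)
  refine ⟨q₀, hB.mem_Q_of_tendsto hCU hCcomp hxd hzσ hqσ (fun _ => hqC _) (fun _ => hqz _), ?_⟩
  have hslope : Tendsto (fun k => (B.φ (x + t (σ k) • d) - B.φ x) / t (σ k)) atTop
      (𝓝 ⟪B.grad x, d⟫) :=
    ((hB.smooth x hx).tendsto_div d).comp
      (tendsto_nhdsWithin_iff.2 ⟨htσ, .of_forall fun _ => (ht_pos _).ne'⟩)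
  have hgrad : Tendsto (fun k => ⟪p, d⟫ + ⟪B.grad (q (σ k)), d⟫) atTop
      (𝓝 (⟪p, d⟫ + ⟪B.grad q₀, d⟫)) :=
    tendsto_const_nhds.add (((hB.continuousOn_grad q₀ (hCU hq₀)).tendsto.comp
      (tendsto_nhdsWithin_iff.2 ⟨hqσ, .of_forall fun _ => hCU (hqC _)⟩)).inner tendsto_const_nhds)
  have hle := le_of_tendsto_of_tendsto hgrad hslope <|
    (hzσ.eventually (isOpen_interior.mem_nhds hx)).mono fun k hk =>
      hB.inner_add_inner_grad_le hCne hCU hCcomp hxd hp (ht_pos _) (interior_subset hk) (hqC _)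
        (hqz _)
  rw [inner_sub_left]
  linarith

end BregmanSetup

/-- **Subdifferential of the farthest-distance function** (Theorem 4.3): for
`C ⊆ U` nonempty compact and `x ∈ U`,
`∂F_C(x) = ∇f(x) - conv ∇f(Q_C(x))`. -/
theorem farthest_distance_subdifferential {J : ℕ} (B : BregmanSetup J)
    (hB : B.IsLegendre) (C : Set (EuclideanSpace ℝ (Fin J))) (hCne : C.Nonempty) (hCU : C ⊆ B.U)
    (hCcomp : IsCompact C) (x : EuclideanSpace ℝ (Fin J)) (hx : x ∈ B.U) :
    subdiff (B.F C) x =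
      (fun p => B.grad x - p) '' convexHull ℝ (B.grad '' B.Q C x) := by
  have hK : IsCompact (convexHull ℝ (B.grad '' B.Q C x)) :=
    ((hB.isCompact_Q hCU hCcomp (interior_subset hx)).image_of_continuousOn
      (hB.continuousOn_grad.mono fun _ hq => hCU hq.1)).convexHull
  refine subset_antisymm (fun p hp => ?_) ?_
  · refine ⟨B.grad x - p, mem_of_forall_exists_inner_le (convex_convexHull ℝ _) hK.isClosed
      fun d => ?_, sub_sub_cancel _ _⟩
    obtain ⟨q, hq, hpq⟩ := hB.exists_mem_Q_inner_le hCne hCU hCcomp hx hp (-d)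
    refine ⟨B.grad q, subset_convexHull ℝ _ (mem_image_of_mem _ hq), ?_⟩
    simp only [inner_neg_right, inner_sub_left] at hpq ⊢
    linarith
  · rw [show (fun p => B.grad x - p) = (AffineEquiv.constVSub ℝ (B.grad x)).toAffineMap from rfl,
      AffineMap.image_convexHull]
    refine convexHull_min ?_ (convex_subdiff _ _)
    rintro _ ⟨_, ⟨q, hq, rfl⟩, rfl⟩
    exact hB.grad_sub_grad_mem_subdiff hCne hCU hCcomp hx hq
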